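/- arXiv:1312.0932 — 6 statements merged into one kernel-verified Lean document; each statement's English description precedes it below -/
import Mathlib

section
/- Let H and Γ be nonnegative random variables on a common probability space (with arbitrary joint distribution), let R_c > 0 and R_s ≥ 0 be the channel and excess source coding rates, and set R_j = R_c + R_s. Define the SSCC outage event O_s = {R_c ≥ (1/2)log₂(1+H)} ∪ {R_c ≤ (1/2)log₂(1 + (2^{2R_j} − 1)/(1+Γ))} and the JDS outage event O_j = {(1/2)log₂(1 + (2^{2R_j} − 1)/(1+Γ)) ≥ (1/2)log₂(1+H)}. Then O_j ⊆ O_s, and consequently E[1_{O_s^c}·(2^{2R_j} + Γ)^{-1} + 1_{O_s}·(1+Γ)^{-1}] ≥ E[1_{O_j^c}·(2^{2R_j} + Γ)^{-1} + 1_{O_j}·(1+Γ)^{-1}]. -/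
open MeasureTheory ProbabilityTheory Set

/-! With `h = ½ log₂ (1 + H)` and `g = ½ log₂ (1 + (2 ^ (2 Rj) - 1) / (1 + Γ))`, JDS is in outage
when `h ≤ g`; then `h ≤ Rc` or `Rc ≤ g`, whichever side of `g` the rate `Rc` lies on, so SSCC is in
outage too. Since `Rj ≥ 0`, the outage distortion `(1 + Γ)⁻¹` dominates `(2 ^ (2 Rj) + Γ)⁻¹`, and
enlarging the outage event can only increase the expected distortion. -/

@[fun_prop]
lemma Real.measurable_logb (b : ℝ) : Measurable (Real.logb b) :=
  Real.measurable_log.div_const _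

lemma Set.setOf_le_subset_union {α β : Type*} [LinearOrder β] (f g : α → β) (c : β) :
    {x | f x ≤ g x} ⊆ {x | f x ≤ c} ∪ {x | c ≤ g x} := by
  intro x (hx : f x ≤ g x)
  rcases le_total (g x) c with h | h
  · exact Or.inl (hx.trans h)
  · exact Or.inr h

lemma Set.indicator_compl_add_indicator_le_of_subset {α M : Type*} [AddCommMonoid M]
    [Preorder M] {s t : Set α} {f g : α → M} (hst : s ⊆ t) (hfg : f ≤ g) (x : α) :
    sᶜ.indicator f x + s.indicator g x ≤ tᶜ.indicator f x + t.indicator g x := by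
  by_cases hs : x ∈ s
  · simp [hs, hst hs]
  · by_cases ht : x ∈ t
    · simpa [hs, ht] using hfg x
    · simp [hs, ht]

namespace MeasureTheory

variable {Ω : Type*} [MeasurableSpace Ω] {μ : Measure Ω}

lemma integral_indicator_compl_add_indicator_mono {s t : Set Ω} {f g : Ω → ℝ}
    (hs : MeasurableSet s) (ht : MeasurableSet t) (hst : s ⊆ t)
    (hf : Integrable f μ) (hg : Integrable g μ) (hfg : f ≤ g) :
    ∫ ω, (sᶜ.indicator f ω + s.indicator g ω) ∂μ
      ≤ ∫ ω, (tᶜ.indicator f ω + t.indicator g ω) ∂μ :=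
  integral_mono ((hf.indicator hs.compl).add (hg.indicator hs))
    ((hf.indicator ht.compl).add (hg.indicator ht))
    (Set.indicator_compl_add_indicator_le_of_subset hst hfg)

lemma integrable_inv_const_add [IsFiniteMeasure μ] {Γ : Ω → ℝ} (hΓ : Measurable Γ)
    (hΓnonneg : ∀ ω, 0 ≤ Γ ω) {c : ℝ} (hc : 1 ≤ c) :
    Integrable (fun ω => (c + Γ ω)⁻¹) μ := by
  refine .of_bound (by fun_prop) 1 (.of_forall fun ω => ?_)
  have hpos : 0 < c + Γ ω := by linarith [hΓnonneg ω]
  rw [Real.norm_of_nonneg (inv_nonneg.2 hpos.le)]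
  exact inv_le_one_of_one_le₀ (by linarith [hΓnonneg ω])

end MeasureTheory

theorem jds_outperforms_sscc_general
    {Ω : Type*} [MeasurableSpace Ω] (μ : Measure Ω) [IsProbabilityMeasure μ]
    (H Γ : Ω → ℝ) (hH : Measurable H) (hΓ : Measurable Γ)
    (hΓnonneg : ∀ ω, 0 ≤ Γ ω)
    (Rc Rs Rj : ℝ) (hRc : 0 < Rc) (hRs : 0 ≤ Rs) (hRj : Rj = Rc + Rs)
    (Os Oj : Set Ω)
    (hOs : Os = {ω | (1 / 2) * Real.logb 2 (1 + H ω) ≤ Rc}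
        ∪ {ω | Rc ≤ (1 / 2) * Real.logb 2 (1 + ((2 : ℝ) ^ (2 * Rj) - 1) / (1 + Γ ω))})
    (hOj : Oj = {ω | (1 / 2) * Real.logb 2 (1 + H ω)
        ≤ (1 / 2) * Real.logb 2 (1 + ((2 : ℝ) ^ (2 * Rj) - 1) / (1 + Γ ω))}) :
    Oj ⊆ Os ∧
    (∫ ω, (Osᶜ.indicator (fun ω => ((2 : ℝ) ^ (2 * Rj) + Γ ω)⁻¹) ω
          + Os.indicator (fun ω => (1 + Γ ω)⁻¹) ω) ∂μ)
      ≥ ∫ ω, (Ojᶜ.indicator (fun ω => ((2 : ℝ) ^ (2 * Rj) + Γ ω)⁻¹) ω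
          + Oj.indicator (fun ω => (1 + Γ ω)⁻¹) ω) ∂μ := by
  have hsub : Oj ⊆ Os := hOj ▸ hOs ▸ Set.setOf_le_subset_union _ _ Rc
  have hOs_meas : MeasurableSet Os := by
    rw [hOs]
    exact (measurableSet_le (by fun_prop) (by fun_prop)).union
      (measurableSet_le (by fun_prop) (by fun_prop))
  have hOj_meas : MeasurableSet Oj := hOj ▸ measurableSet_le (by fun_prop) (by fun_prop)
  have hpow : 1 ≤ (2 : ℝ) ^ (2 * Rj) := Real.one_le_rpow (by norm_num) (by linarith)
  have hdist : (fun ω => ((2 : ℝ) ^ (2 * Rj) + Γ ω)⁻¹) ≤ fun ω => (1 + Γ ω)⁻¹ :=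
    fun ω => inv_anti₀ (by linarith [hΓnonneg ω]) (by linarith)
  exact ⟨hsub, integral_indicator_compl_add_indicator_mono hOj_meas hOs_meas hsub
    (integrable_inv_const_add hΓ hΓnonneg hpow) (integrable_inv_const_add hΓ hΓnonneg le_rfl)
    hdist⟩

/-- JDS outperforms SSCC (Lemma 2). With `R_j = R_c + R_s`, the JDS outage
event is contained in the SSCC outage event, and hence the SSCC expected distortion is
at least the JDS expected distortion. -/
theorem jds_outperforms_sscc
    {Ω : Type*} [MeasurableSpace Ω] (μ : Measure Ω) [IsProbabilityMeasure μ]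
    (H Γ : Ω → ℝ) (hH : Measurable H) (hΓ : Measurable Γ)
    (hHnonneg : ∀ ω, 0 ≤ H ω) (hΓnonneg : ∀ ω, 0 ≤ Γ ω)
    (Rc Rs Rj : ℝ) (hRc : 0 < Rc) (hRs : 0 ≤ Rs) (hRj : Rj = Rc + Rs)
    (Os Oj : Set Ω)
    (hOs : Os = {ω | (1 / 2) * Real.logb 2 (1 + H ω) ≤ Rc}
        ∪ {ω | Rc ≤ (1 / 2) * Real.logb 2 (1 + ((2 : ℝ) ^ (2 * Rj) - 1) / (1 + Γ ω))})
    (hOj : Oj = {ω | (1 / 2) * Real.logb 2 (1 + H ω)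
        ≤ (1 / 2) * Real.logb 2 (1 + ((2 : ℝ) ^ (2 * Rj) - 1) / (1 + Γ ω))}) :
    Oj ⊆ Os ∧
    (∫ ω, (Osᶜ.indicator (fun ω => ((2 : ℝ) ^ (2 * Rj) + Γ ω)⁻¹) ω
          + Os.indicator (fun ω => (1 + Γ ω)⁻¹) ω) ∂μ)
      ≥ ∫ ω, (Ojᶜ.indicator (fun ω => ((2 : ℝ) ^ (2 * Rj) + Γ ω)⁻¹) ω
          + Oj.indicator (fun ω => (1 + Γ ω)⁻¹) ω) ∂μ :=
  jds_outperforms_sscc_general μ H Γ hH hΓ hΓnonneg Rc Rs Rj hRc hRs hRj Os Oj hOs hOj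
end

section
/- Let H and Γ be independent nonnegative random variables with E[H] < ∞, E[Γ] = μ < ∞, and Var(Γ) = σ² < ∞. Fix δ ∈ (0, μ] and set γ̄ = μ − δ. Then 0 ≤ E[ 1_{Γ<γ̄}·(1+Γ)^{-1} + 1_{Γ≥γ̄}·((1+H)(1+γ̄) + Γ − γ̄)^{-1} ] − E[ ((1+H)(1+Γ))^{-1} ] ≤ σ²/δ² + 2δ·E[H]. In particular, for a sequence of side-information gains (Γ_L) with variances σ_L² → 0 as L → ∞, choosing δ_L appropriately makes this difference tend to 0. -/
/-!
Pointwise in `(H, Γ)` the layered distortion dominates the informed one, and when `Γ ≥ γ̄` the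
two denominators differ by exactly `H (Γ - γ̄)` while both are at least `1`, so the loss is at
most `H (Γ - γ̄)`. On `|Γ - E Γ| < δ` this is at most `2δH`; elsewhere the loss is at most `1`, and
Chebyshev bounds the probability of that event by `σ²/δ²`.
-/

open MeasureTheory ProbabilityTheory Set

noncomputable def layeredDistortion (γbar h g : ℝ) : ℝ :=
  if g < γbar then (1 + g)⁻¹ else ((1 + h) * (1 + γbar) + g - γbar)⁻¹

noncomputable def informedDistortion (h g : ℝ) : ℝ :=
  ((1 + h) * (1 + g))⁻¹

section Pointwise

variable {γbar h g : ℝ}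

lemma one_le_layeredDenominator (hh : 0 ≤ h) (hg : 0 ≤ g) (hγ : -1 ≤ γbar) :
    1 ≤ (1 + h) * (1 + γbar) + g - γbar := by
  nlinarith

lemma informedDistortion_nonneg (hh : 0 ≤ h) (hg : 0 ≤ g) : 0 ≤ informedDistortion h g := by
  unfold informedDistortion
  positivity

lemma informedDistortion_le_one (hh : 0 ≤ h) (hg : 0 ≤ g) : informedDistortion h g ≤ 1 :=
  inv_le_one_of_one_le₀ (by nlinarith)

lemma layeredDistortion_le_one (hh : 0 ≤ h) (hg : 0 ≤ g) (hγ : -1 ≤ γbar) :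
    layeredDistortion γbar h g ≤ 1 := by
  unfold layeredDistortion
  split_ifs
  · exact inv_le_one_of_one_le₀ (by linarith)
  · exact inv_le_one_of_one_le₀ (one_le_layeredDenominator hh hg hγ)

lemma informedDistortion_le_layeredDistortion (hh : 0 ≤ h) (hg : 0 ≤ g) (hγ : -1 ≤ γbar) :
    informedDistortion h g ≤ layeredDistortion γbar h g := by
  unfold layeredDistortion informedDistortion
  split_ifs
  · exact inv_anti₀ (by linarith) (by nlinarith)
  · exact inv_anti₀ (by linarith [one_le_layeredDenominator hh hg hγ]) (by nlinarith)

lemma layeredDistortion_sub_informedDistortion_le_mul (hh : 0 ≤ h) (hg : 0 ≤ g)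
    (hγ : -1 ≤ γbar) (hγg : γbar ≤ g) :
    layeredDistortion γbar h g - informedDistortion h g ≤ h * (g - γbar) := by
  unfold layeredDistortion informedDistortion
  rw [if_neg hγg.not_gt]
  set A := (1 + h) * (1 + γbar) + g - γbar
  have hA : 1 ≤ A := one_le_layeredDenominator hh hg hγ
  have hB : (1 + h) * (1 + g) = A + h * (g - γbar) := by ring
  have hgap : 0 ≤ h * (g - γbar) := mul_nonneg hh (by linarith)
  rw [hB, inv_sub_inv (by positivity) (by positivity), add_sub_cancel_left]
  exact div_le_self hgap (by nlinarith)

lemma layeredDistortion_sub_informedDistortion_le_indicator_add {m δ : ℝ} (hh : 0 ≤ h)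
    (hg : 0 ≤ g) (hδ : 0 ≤ δ) (hγ : -1 ≤ m - δ) :
    layeredDistortion (m - δ) h g - informedDistortion h g
      ≤ {x | δ ≤ |x - m|}.indicator 1 g + 2 * δ * h := by
  by_cases hdev : δ ≤ |g - m|
  · rw [indicator_of_mem (s := {x | δ ≤ |x - m|}) hdev, Pi.one_apply]
    linarith [layeredDistortion_le_one hh hg hγ, informedDistortion_nonneg hh hg,
      mul_nonneg (mul_nonneg zero_le_two hδ) hh]
  · rw [indicator_of_notMem (s := {x | δ ≤ |x - m|}) hdev, zero_add]
    obtain ⟨hlo, hhi⟩ := abs_sub_lt_iff.1 (not_le.1 hdev)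
    calc layeredDistortion (m - δ) h g - informedDistortion h g
        ≤ h * (g - (m - δ)) :=
          layeredDistortion_sub_informedDistortion_le_mul hh hg hγ (by linarith)
      _ ≤ 2 * δ * h := by nlinarith

end Pointwise

section Expectation

variable {Ω : Type*} [MeasurableSpace Ω] {μ : Measure Ω} [IsFiniteMeasure μ] {H Γ : Ω → ℝ}

lemma measureReal_le_variance_div_sq (hΓ : MemLp Γ 2 μ) {c : ℝ} (hc : 0 < c) :
    μ.real {ω | c ≤ |Γ ω - μ[Γ]|} ≤ variance Γ μ / c ^ 2 :=
  ENNReal.toReal_le_of_le_ofReal (div_nonneg (variance_nonneg Γ μ) (by positivity))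
    (meas_ge_le_variance_div_sq hΓ hc)

lemma integrable_informedDistortion (hH : Measurable H) (hΓ : Measurable Γ)
    (hHnonneg : ∀ ω, 0 ≤ H ω) (hΓnonneg : ∀ ω, 0 ≤ Γ ω) :
    Integrable (fun ω => informedDistortion (H ω) (Γ ω)) μ :=
  .of_mem_Icc 0 1 (by unfold informedDistortion; fun_prop) <| .of_forall fun ω =>
    ⟨informedDistortion_nonneg (hHnonneg ω) (hΓnonneg ω),
      informedDistortion_le_one (hHnonneg ω) (hΓnonneg ω)⟩

lemma integrable_layeredDistortion (hH : Measurable H) (hΓ : Measurable Γ)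
    (hHnonneg : ∀ ω, 0 ≤ H ω) (hΓnonneg : ∀ ω, 0 ≤ Γ ω) {γbar : ℝ} (hγ : -1 ≤ γbar) :
    Integrable (fun ω => layeredDistortion γbar (H ω) (Γ ω)) μ := by
  have hmeas : Measurable fun ω => layeredDistortion γbar (H ω) (Γ ω) :=
    Measurable.ite (measurableSet_lt hΓ measurable_const) (by fun_prop) (by fun_prop)
  exact .of_mem_Icc 0 1 hmeas.aemeasurable <| .of_forall fun ω =>
    ⟨(informedDistortion_nonneg (hHnonneg ω) (hΓnonneg ω)).trans
      (informedDistortion_le_layeredDistortion (hHnonneg ω) (hΓnonneg ω) hγ),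
      layeredDistortion_le_one (hHnonneg ω) (hΓnonneg ω) hγ⟩

lemma integral_informedDistortion_le_integral_layeredDistortion (hH : Measurable H)
    (hΓ : Measurable Γ) (hHnonneg : ∀ ω, 0 ≤ H ω) (hΓnonneg : ∀ ω, 0 ≤ Γ ω) {γbar : ℝ}
    (hγ : -1 ≤ γbar) :
    ∫ ω, informedDistortion (H ω) (Γ ω) ∂μ ≤ ∫ ω, layeredDistortion γbar (H ω) (Γ ω) ∂μ :=
  integral_mono (integrable_informedDistortion hH hΓ hHnonneg hΓnonneg)
    (integrable_layeredDistortion hH hΓ hHnonneg hΓnonneg hγ) fun ω =>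
    informedDistortion_le_layeredDistortion (hHnonneg ω) (hΓnonneg ω) hγ

lemma integral_layeredDistortion_sub_integral_informedDistortion_le (hH : Measurable H)
    (hΓ : Measurable Γ) (hHnonneg : ∀ ω, 0 ≤ H ω) (hΓnonneg : ∀ ω, 0 ≤ Γ ω)
    (hHint : Integrable H μ) (hΓL2 : MemLp Γ 2 μ) {δ : ℝ} (hδ : 0 < δ) (hγ : -1 ≤ μ[Γ] - δ) :
    ∫ ω, layeredDistortion (μ[Γ] - δ) (H ω) (Γ ω) ∂μ - ∫ ω, informedDistortion (H ω) (Γ ω) ∂μ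
      ≤ variance Γ μ / δ ^ 2 + 2 * δ * ∫ ω, H ω ∂μ := by
  set S := {x : ℝ | δ ≤ |x - μ[Γ]|}
  have hS : MeasurableSet (Γ ⁻¹' S) := measurableSet_le measurable_const (hΓ.sub_const _).abs
  have hSint : Integrable (fun ω => S.indicator 1 (Γ ω)) μ :=
    (integrable_const (1 : ℝ)).indicator hS
  have hL := integrable_layeredDistortion (μ := μ) hH hΓ hHnonneg hΓnonneg hγ
  have hI := integrable_informedDistortion (μ := μ) hH hΓ hHnonneg hΓnonneg
  calc _ = ∫ ω, (layeredDistortion (μ[Γ] - δ) (H ω) (Γ ω) - informedDistortion (H ω) (Γ ω)) ∂μ :=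
        (integral_sub hL hI).symm
    _ ≤ ∫ ω, (S.indicator 1 (Γ ω) + 2 * δ * H ω) ∂μ :=
        integral_mono (hL.sub hI) (hSint.add (hHint.const_mul _)) fun ω =>
          layeredDistortion_sub_informedDistortion_le_indicator_add (hHnonneg ω) (hΓnonneg ω)
            hδ.le hγ
    _ = μ.real {ω | δ ≤ |Γ ω - μ[Γ]|} + 2 * δ * ∫ ω, H ω ∂μ := by
        rw [integral_add hSint (hHint.const_mul _), integral_const_mul]
        congr 1
        exact integral_indicator_one hS
    _ ≤ variance Γ μ / δ ^ 2 + 2 * δ * ∫ ω, H ω ∂μ := by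
        gcongr
        exact measureReal_le_variance_div_sq hΓL2 hδ

end Expectation

lemma indicator_add_indicator_eq_layeredDistortion {Ω : Type*} (H Γ : Ω → ℝ) (γbar : ℝ)
    (ω : Ω) :
    {ω | Γ ω < γbar}.indicator (fun ω => (1 + Γ ω)⁻¹) ω
        + {ω | γbar ≤ Γ ω}.indicator (fun ω => ((1 + H ω) * (1 + γbar) + Γ ω - γbar)⁻¹) ω
      = layeredDistortion γbar (H ω) (Γ ω) := by
  by_cases h : Γ ω < γbar
  · simp [layeredDistortion, h, not_le.2 h]
  · simp [layeredDistortion, h, not_lt.1 h]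

theorem informed_bound_convergence_general
    {Ω : Type*} [MeasurableSpace Ω] (μ : Measure Ω) [IsProbabilityMeasure μ]
    (H Γ : Ω → ℝ) (hH : Measurable H) (hΓ : Measurable Γ)
    (hHnonneg : ∀ ω, 0 ≤ H ω) (hΓnonneg : ∀ ω, 0 ≤ Γ ω)
    (hHint : Integrable H μ) (hΓL2 : MemLp Γ 2 μ)
    (m σ2 δ γbar : ℝ)
    (hm : ∫ ω, Γ ω ∂μ = m) (hσ2 : variance Γ μ = σ2)
    (hδ : 0 < δ) (hδm : δ ≤ m) (hγbar : γbar = m - δ) :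
    0 ≤ (∫ ω, ({ω | Γ ω < γbar}.indicator (fun ω => (1 + Γ ω)⁻¹) ω
            + {ω | γbar ≤ Γ ω}.indicator
                (fun ω => ((1 + H ω) * (1 + γbar) + Γ ω - γbar)⁻¹) ω) ∂μ)
          - ∫ ω, ((1 + H ω) * (1 + Γ ω))⁻¹ ∂μ
    ∧ (∫ ω, ({ω | Γ ω < γbar}.indicator (fun ω => (1 + Γ ω)⁻¹) ω
            + {ω | γbar ≤ Γ ω}.indicator
                (fun ω => ((1 + H ω) * (1 + γbar) + Γ ω - γbar)⁻¹) ω) ∂μ)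
          - (∫ ω, ((1 + H ω) * (1 + Γ ω))⁻¹ ∂μ)
        ≤ σ2 / δ ^ 2 + 2 * δ * ∫ ω, H ω ∂μ := by
  subst hm hσ2 hγbar
  have hγ : -1 ≤ μ[Γ] - δ := by linarith
  simp only [indicator_add_indicator_eq_layeredDistortion]
  exact ⟨sub_nonneg.2
      (integral_informedDistortion_le_integral_layeredDistortion hH hΓ hHnonneg hΓnonneg hγ),
    integral_layeredDistortion_sub_integral_informedDistortion_le hH hΓ hHnonneg hΓnonneg hHint
      hΓL2 hδ hγ⟩

/-- quantitative bound behind Lemma 3. For independent nonnegative `H, Γ`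
with `E[H] < ∞`, `E[Γ] = m`, `Var(Γ) = σ²`, `δ ∈ (0, m]`, `γ̄ = m − δ`, the difference
between the single-layer expected distortion targeting `γ̄` and the informed encoder
lower bound is between `0` and `σ²/δ² + 2δ·E[H]`. -/
theorem informed_bound_convergence
    {Ω : Type*} [MeasurableSpace Ω] (μ : Measure Ω) [IsProbabilityMeasure μ]
    (H Γ : Ω → ℝ) (hH : Measurable H) (hΓ : Measurable Γ)
    (hHnonneg : ∀ ω, 0 ≤ H ω) (hΓnonneg : ∀ ω, 0 ≤ Γ ω)
    (hHint : Integrable H μ) (hΓL2 : MemLp Γ 2 μ)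
    (hindep : IndepFun H Γ μ)
    (m σ2 δ γbar : ℝ)
    (hm : ∫ ω, Γ ω ∂μ = m) (hσ2 : variance Γ μ = σ2)
    (hδ : 0 < δ) (hδm : δ ≤ m) (hγbar : γbar = m - δ) :
    0 ≤ (∫ ω, ({ω | Γ ω < γbar}.indicator (fun ω => (1 + Γ ω)⁻¹) ω
            + {ω | γbar ≤ Γ ω}.indicator
                (fun ω => ((1 + H ω) * (1 + γbar) + Γ ω - γbar)⁻¹) ω) ∂μ)
          - ∫ ω, ((1 + H ω) * (1 + Γ ω))⁻¹ ∂μ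
    ∧ (∫ ω, ({ω | Γ ω < γbar}.indicator (fun ω => (1 + Γ ω)⁻¹) ω
            + {ω | γbar ≤ Γ ω}.indicator
                (fun ω => ((1 + H ω) * (1 + γbar) + Γ ω - γbar)⁻¹) ω) ∂μ)
          - (∫ ω, ((1 + H ω) * (1 + Γ ω))⁻¹ ∂μ)
        ≤ σ2 / δ ^ 2 + 2 * δ * ∫ ω, H ω ∂μ :=
  informed_bound_convergence_general μ H Γ hH hΓ hHnonneg hΓnonneg hHint hΓL2 m σ2 δ γbar hm hσ2 hδ
    hδm hγbar
end

section
/- Let L_s > 0. For κ ∈ ℝ define Δ_{p1}(κ) = inf{ (1−β)^+ + L_s·β : β ≥ 0 and 1−β ≤ κ } and Δ_{p2}(κ) = inf{ max(κ,0) + 1 + L_s·β : β ≥ 0 and 1−β > κ }, with the convention that the infimum over an empty set is +∞, and where (x)^+ = max{x,0}. Then sup_{κ∈ℝ} min{Δ_{p1}(κ), Δ_{p2}(κ)} = 1 + (1 − 1/L_s)^+. -/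
/-!
Put `κ⋆ = 1 - 1/Ls`. For `κ ≥ κ⋆` the choice `β = 1/Ls` is admissible in `Δ_{p1}` and gives
`(1 - 1/Ls)⁺ + 1`; for `κ < κ⋆` the choice `β = 0` is admissible in `Δ_{p2}` and gives
`κ⁺ + 1 ≤ κ⋆⁺ + 1`. Conversely, at `κ = κ⋆` every admissible `β` in `Δ_{p1}` has `Ls β ≥ 1`,
so `(1 - β)⁺ + Ls β ≥ max (Ls β) (1 + (Ls - 1) β) ≥ 1 + κ⋆⁺`, while `Δ_{p2}(κ⋆)` is trivially
at least `κ⋆⁺ + 1`.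
-/

namespace PartiallyInformedEncoder

/-- `Δ_{p1}(κ)`, with `sInf ∅ = ⊤` in `EReal`. -/
noncomputable def exponentP1 (Ls κ : ℝ) : EReal :=
  sInf {x : EReal | ∃ β : ℝ, 0 ≤ β ∧ 1 - β ≤ κ ∧ x = ((max (1 - β) 0 + Ls * β : ℝ) : EReal)}

/-- `Δ_{p2}(κ)`, with `sInf ∅ = ⊤` in `EReal`. -/
noncomputable def exponentP2 (Ls κ : ℝ) : EReal :=
  sInf {x : EReal | ∃ β : ℝ, 0 ≤ β ∧ κ < 1 - β ∧ x = ((max κ 0 + 1 + Ls * β : ℝ) : EReal)}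

variable {Ls κ : ℝ}

lemma exponentP1_le {β : ℝ} (hβ : 0 ≤ β) (hκ : 1 - β ≤ κ) :
    exponentP1 Ls κ ≤ ((max (1 - β) 0 + Ls * β : ℝ) : EReal) :=
  sInf_le ⟨β, hβ, hκ, rfl⟩

lemma le_exponentP1 {c : ℝ} (h : ∀ β, 0 ≤ β → 1 - β ≤ κ → c ≤ max (1 - β) 0 + Ls * β) :
    (c : EReal) ≤ exponentP1 Ls κ :=
  le_sInf <| by
    rintro _ ⟨β, hβ, hκ, rfl⟩
    exact EReal.coe_le_coe_iff.mpr (h β hβ hκ)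

lemma exponentP2_le {β : ℝ} (hβ : 0 ≤ β) (hκ : κ < 1 - β) :
    exponentP2 Ls κ ≤ ((max κ 0 + 1 + Ls * β : ℝ) : EReal) :=
  sInf_le ⟨β, hβ, hκ, rfl⟩

lemma le_exponentP2 {c : ℝ} (h : ∀ β, 0 ≤ β → κ < 1 - β → c ≤ max κ 0 + 1 + Ls * β) :
    (c : EReal) ≤ exponentP2 Ls κ :=
  le_sInf <| by
    rintro _ ⟨β, hβ, hκ, rfl⟩
    exact EReal.coe_le_coe_iff.mpr (h β hβ hκ)

lemma one_add_max_le_of_inv_le (hLs : 0 < Ls) {β : ℝ} (hβ : 1 / Ls ≤ β) :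
    1 + max (1 - 1 / Ls) 0 ≤ max (1 - β) 0 + Ls * β := by
  have hLsβ : 1 ≤ Ls * β := by
    rw [mul_comm]; exact (div_le_iff₀ hLs).mp hβ
  rcases le_total Ls 1 with hle | hge
  · have : max (1 - 1 / Ls) 0 = 0 :=
      max_eq_right (by linarith [(one_le_div hLs).mpr hle])
    linarith [le_max_right (1 - β) 0]
  · have hinv : (Ls - 1) * (1 / Ls) = 1 - 1 / Ls := by field_simp
    have hslope : (Ls - 1) * (1 / Ls) ≤ (Ls - 1) * β :=
      mul_le_mul_of_nonneg_left hβ (by linarith)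
    have : max (1 - 1 / Ls) 0 = 1 - 1 / Ls :=
      max_eq_left (by linarith [(div_le_one hLs).mpr hge])
    linarith [le_max_left (1 - β) 0]

lemma min_exponentP_le (hLs : 0 < Ls) (κ : ℝ) :
    min (exponentP1 Ls κ) (exponentP2 Ls κ) ≤ ((1 + max (1 - 1 / Ls) 0 : ℝ) : EReal) := by
  rcases le_or_gt (1 - 1 / Ls) κ with hκ | hκ
  · refine (min_le_left _ _).trans <|
      (exponentP1_le (β := 1 / Ls) (by positivity) (by linarith)).trans ?_
    rw [mul_one_div_cancel hLs.ne', add_comm]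
  · refine (min_le_right _ _).trans <|
      (exponentP2_le (β := 0) le_rfl (by linarith [one_div_pos.mpr hLs])).trans ?_
    exact EReal.coe_le_coe_iff.mpr (by linarith [max_le_max_right 0 hκ.le])

lemma le_min_exponentP_threshold (hLs : 0 < Ls) :
    ((1 + max (1 - 1 / Ls) 0 : ℝ) : EReal) ≤
      min (exponentP1 Ls (1 - 1 / Ls)) (exponentP2 Ls (1 - 1 / Ls)) :=
  le_min
    (le_exponentP1 fun _ _ hκ => one_add_max_le_of_inv_le hLs (by linarith))
    (le_exponentP2 fun _ hβ _ => by linarith [mul_nonneg hLs.le hβ])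

end PartiallyInformedEncoder

open PartiallyInformedEncoder in
/-- the optimization of Appendix C giving the distortion exponent of the
partially informed encoder lower bound:
`sup_{κ∈ℝ} min{Δ_{p1}(κ), Δ_{p2}(κ)} = 1 + (1 − 1/L_s)⁺`, where the infima over empty
sets are `+∞` (taken in `EReal`). -/
theorem partially_informed_exponent_optimization
    (Ls : ℝ) (hLs : 0 < Ls) :
    (⨆ κ : ℝ, min
        (sInf {x : EReal | ∃ β : ℝ, 0 ≤ β ∧ 1 - β ≤ κ ∧
            x = ((max (1 - β) 0 + Ls * β : ℝ) : EReal)})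
        (sInf {x : EReal | ∃ β : ℝ, 0 ≤ β ∧ κ < 1 - β ∧
            x = ((max κ 0 + 1 + Ls * β : ℝ) : EReal)}))
      = ((1 + max (1 - 1 / Ls) 0 : ℝ) : EReal) :=
  le_antisymm (iSup_le (min_exponentP_le hLs))
    (le_iSup_of_le (1 - 1 / Ls) (le_min_exponentP_threshold hLs))
end

section
/- Let L_s > 0 and let Γ₀ be Gamma-distributed with shape L_s and rate L_s (density L_s^{L_s} x^{L_s−1} e^{−L_s x}/Γ(L_s) on [0,∞), mean 1). For ρ > 1 and γ̂ ≥ 0 define ED_pe(γ̂, ρ) = E[ 1_{ρΓ₀ < γ̂}·(1 + ρΓ₀)^{-1} ] + E[ 1_{ρΓ₀ ≥ γ̂}·((γ̂ + 1)(1 + ρ) + ρΓ₀ − γ̂)^{-1} ]. Then −lim_{ρ→∞} log( inf_{γ̂ ≥ 0} ED_pe(γ̂, ρ) ) / log ρ exists and equals 1 + (1 − 1/L_s)^+, where (x)^+ = max{x,0}. -/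
/-!
Write `A = max (1 - 1/L) 0`, so that the claimed exponent is `1 + A`. The expected distortion is
squeezed between two constant multiples of `ρ^(-(1 + A))`, the lower one uniformly in `γ̂`; only
the behaviour `≍ x^(L-1)` of the Gamma density near `0` matters.

Lower bound: if `γ̂ ≥ 2ρ^A`, then on the event `Γ₀ ≤ ρ^(A-1)`, of probability `≍ ρ^((A-1)L)`, the
first branch applies and the distortion is at least `ρ^(-A)/2`; since `(1 - A)L ≤ 1` this gives
`≳ ρ^(-(1+A))`. If `γ̂ < 2ρ^A`, then on `2 < Γ₀ ≤ 3` the second branch applies with denominator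
`≲ ρ^(1+A)`.

Upper bound: for `L ≤ 1` take `γ̂ = 0`, where the distortion never exceeds `1/ρ`. For `L > 1` take
`γ̂ = ρ^A`: the first branch costs at most `E[(ρΓ₀)⁻¹; Γ₀ ≤ ρ^(A-1)] ≲ ρ^(-1) ρ^((A-1)(L-1))`, the
second at most `(γ̂ρ)⁻¹`, and both equal `ρ^(-(1+A))`.
-/

open MeasureTheory ProbabilityTheory Filter Set Real

namespace ProbabilityTheory

variable {a r : ℝ}

lemma measurable_gammaPDF : Measurable (gammaPDF a r) :=
  (measurable_gammaPDFReal a r).ennreal_ofReal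

lemma integrable_gammaPDFReal (ha : 0 < a) (hr : 0 < r) : Integrable (gammaPDFReal a r) := by
  refine ⟨(measurable_gammaPDFReal a r).aestronglyMeasurable, ?_⟩
  rw [hasFiniteIntegral_iff_ofReal (ae_of_all _ (gammaPDFReal_nonneg ha hr))]
  exact (lintegral_gammaPDF_eq_one ha hr).trans_lt ENNReal.one_lt_top

lemma gammaPDFReal_le (ha : 0 < a) (hr : 0 ≤ r) {x : ℝ} (hx : 0 ≤ x) :
    gammaPDFReal a r x ≤ r ^ a / Gamma a * x ^ (a - 1) := by
  have : 0 ≤ r ^ a / Gamma a * x ^ (a - 1) := by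
    have := Gamma_pos_of_pos ha
    positivity
  rw [gammaPDFReal, if_pos hx]
  exact mul_le_of_le_one_right this (exp_le_one_iff.2 (by nlinarith))

lemma le_gammaPDFReal (ha : 0 < a) (hr : 0 ≤ r) {x w : ℝ} (hx : 0 ≤ x) (hxw : x ≤ w) :
    r ^ a / Gamma a * x ^ (a - 1) * exp (-(r * w)) ≤ gammaPDFReal a r x := by
  have : 0 ≤ r ^ a / Gamma a * x ^ (a - 1) := by
    have := Gamma_pos_of_pos ha
    positivity
  rw [gammaPDFReal, if_pos hx]
  exact mul_le_mul_of_nonneg_left (exp_le_exp.2 (by nlinarith)) this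

lemma ae_nonneg_gammaMeasure : ∀ᵐ x ∂gammaMeasure a r, 0 ≤ x := by
  rw [gammaMeasure, ae_withDensity_iff measurable_gammaPDF]
  exact ae_of_all _ fun x hx => not_lt.1 fun hx0 => hx (gammaPDF_of_neg hx0)

lemma integral_gammaMeasure (ha : 0 < a) (hr : 0 < r) (g : ℝ → ℝ) :
    ∫ x, g x ∂gammaMeasure a r = ∫ x in Ioi 0, gammaPDFReal a r x * g x := by
  rw [gammaMeasure, integral_withDensity_eq_integral_toReal_smul measurable_gammaPDF
      (ae_of_all _ fun _ => ENNReal.ofReal_lt_top),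
    ← integral_Ici_eq_integral_Ioi, setIntegral_eq_integral_of_forall_compl_eq_zero]
  · simp only [gammaPDF, ENNReal.toReal_ofReal (gammaPDFReal_nonneg ha hr _), smul_eq_mul]
  · intro x hx
    rw [gammaPDFReal, if_neg (notMem_Ici.1 hx).not_ge, zero_mul]

lemma measureReal_gammaMeasure (ha : 0 < a) (hr : 0 < r) {s : Set ℝ} (hs : MeasurableSet s) :
    (gammaMeasure a r).real s = ∫ x in s, gammaPDFReal a r x := by
  rw [measureReal_def, gammaMeasure, withDensity_apply _ hs]
  exact (integral_eq_lintegral_of_nonneg_ae (ae_of_all _ (gammaPDFReal_nonneg ha hr))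
    (by fun_prop)).symm

lemma le_gammaMeasure_real_Ioc (ha : 0 < a) (hr : 0 < r) {u v w : ℝ} (hu : 0 ≤ u)
    (huv : u ≤ v) (hvw : v ≤ w) :
    r ^ a / Gamma a * ((v ^ a - u ^ a) / a) * exp (-(r * w))
      ≤ (gammaMeasure a r).real (Ioc u v) := by
  have hint : IntegrableOn (fun x : ℝ => x ^ (a - 1)) (Ioc u v) := by
    rw [← intervalIntegrable_iff_integrableOn_Ioc_of_le huv]
    exact intervalIntegral.intervalIntegrable_rpow' (by linarith)
  rw [measureReal_gammaMeasure ha hr measurableSet_Ioc]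
  calc r ^ a / Gamma a * ((v ^ a - u ^ a) / a) * exp (-(r * w))
      = ∫ x in Ioc u v, r ^ a / Gamma a * x ^ (a - 1) * exp (-(r * w)) := by
        rw [integral_mul_const, integral_const_mul, ← intervalIntegral.integral_of_le huv,
          integral_rpow (Or.inl (by linarith)), sub_add_cancel]
    _ ≤ ∫ x in Ioc u v, gammaPDFReal a r x :=
        setIntegral_mono_on ((hint.const_mul _).mul_const _)
          (integrable_gammaPDFReal ha hr).integrableOn measurableSet_Ioc
          fun x hx => le_gammaPDFReal ha hr.le (hu.trans hx.1.le) (hx.2.trans hvw)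

end ProbabilityTheory

lemma tendsto_neg_log_div_log_of_le_of_le {f : ℝ → ℝ} {c K D : ℝ} (hc : 0 < c)
    (hf : ∀ᶠ ρ in atTop, c * ρ ^ (-D) ≤ f ρ ∧ f ρ ≤ K * ρ ^ (-D)) :
    Tendsto (fun ρ => -(log (f ρ) / log ρ)) atTop (nhds D) := by
  have hlim (b : ℝ) : Tendsto (fun ρ => D - b / log ρ) atTop (nhds D) := by
    simpa using tendsto_const_nhds.sub (tendsto_const_nhds.div_atTop tendsto_log_atTop)
  have hrw : ∀ ρ > 1, 0 < f ρ →
      -(log (f ρ) / log ρ) = D - log (f ρ * ρ ^ D) / log ρ := by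
    intro ρ hρ hfρ
    have := (log_pos hρ).ne'
    rw [log_mul hfρ.ne' (by positivity), log_rpow (by linarith)]
    field_simp
    ring
  refine tendsto_of_tendsto_of_tendsto_of_le_of_le' (hlim (log K)) (hlim (log c)) ?_ ?_ <;>
  · filter_upwards [hf, eventually_gt_atTop 1] with ρ ⟨hlo, hhi⟩ hρ
    have hρD : 0 < ρ ^ D := by positivity
    rw [rpow_neg (by linarith), ← div_eq_mul_inv, div_le_iff₀ hρD] at hlo
    rw [rpow_neg (by linarith), ← div_eq_mul_inv, le_div_iff₀ hρD] at hhi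
    have hfρ : 0 < f ρ * ρ ^ D := hc.trans_le hlo
    rw [hrw ρ hρ (pos_of_mul_pos_left hfρ hρD.le)]
    gcongr
    exact (log_pos hρ).le

namespace PartiallyInformed

noncomputable def distortion (ρ γ x : ℝ) : ℝ :=
  if ρ * x < γ then (1 + ρ * x)⁻¹ else ((γ + 1) * (1 + ρ) + ρ * x - γ)⁻¹

noncomputable def expectedDistortion (μ : Measure ℝ) (ρ γ : ℝ) : ℝ :=
  ∫ x, distortion ρ γ x ∂μ

noncomputable def distortionExponent (L : ℝ) : ℝ :=
  1 + max (1 - 1 / L) 0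

variable {ρ γ x : ℝ}

lemma distortion_of_lt (h : ρ * x < γ) : distortion ρ γ x = (1 + ρ * x)⁻¹ := if_pos h

lemma distortion_of_le (h : γ ≤ ρ * x) :
    distortion ρ γ x = (γ * ρ + 1 + ρ + ρ * x)⁻¹ := by
  rw [distortion, if_neg h.not_gt]
  ring_nf

lemma measurable_distortion (ρ γ : ℝ) : Measurable (distortion ρ γ) :=
  Measurable.ite (measurableSet_lt (by fun_prop) measurable_const) (by fun_prop) (by fun_prop)

lemma distortion_nonneg (hρ : 0 ≤ ρ) (hγ : 0 ≤ γ) (hx : 0 ≤ x) :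
    0 ≤ distortion ρ γ x := by
  rcases lt_or_ge (ρ * x) γ with h | h
  · rw [distortion_of_lt h]; positivity
  · rw [distortion_of_le h]; positivity

lemma distortion_le_one (hρ : 0 ≤ ρ) (hγ : 0 ≤ γ) (hx : 0 ≤ x) :
    distortion ρ γ x ≤ 1 := by
  have : 0 ≤ ρ * x := by positivity
  rcases lt_or_ge (ρ * x) γ with h | h
  · rw [distortion_of_lt h]; exact inv_le_one_of_one_le₀ (by linarith)
  · rw [distortion_of_le h]; exact inv_le_one_of_one_le₀ (by nlinarith)

section Measure

variable {μ : Measure ℝ}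

lemma integrable_distortion [IsFiniteMeasure μ] (hμ : ∀ᵐ x ∂μ, 0 ≤ x) (hρ : 0 ≤ ρ)
    (hγ : 0 ≤ γ) : Integrable (distortion ρ γ) μ := by
  refine .mono' (integrable_const 1) (measurable_distortion ρ γ).aestronglyMeasurable ?_
  filter_upwards [hμ] with x hx
  rw [Real.norm_of_nonneg (distortion_nonneg hρ hγ hx)]
  exact distortion_le_one hρ hγ hx

lemma mul_measureReal_le_expectedDistortion [IsFiniteMeasure μ] (hμ : ∀ᵐ x ∂μ, 0 ≤ x)
    (hρ : 0 ≤ ρ) (hγ : 0 ≤ γ) {s : Set ℝ} (hs : MeasurableSet s) {c : ℝ}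
    (hc : ∀ x ∈ s, c ≤ distortion ρ γ x) :
    c * μ.real s ≤ expectedDistortion μ ρ γ := by
  have hint := integrable_distortion hμ hρ hγ
  calc c * μ.real s ≤ ∫ x in s, distortion ρ γ x ∂μ :=
        setIntegral_ge_of_const_le_real hs (measure_ne_top _ _) hc hint.integrableOn
    _ ≤ expectedDistortion μ ρ γ :=
        setIntegral_le_integral hint <| by
          filter_upwards [hμ] with x hx using distortion_nonneg hρ hγ hx

lemma expectedDistortion_zero_le [IsProbabilityMeasure μ] (hμ : ∀ᵐ x ∂μ, 0 ≤ x)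
    (hρ : 0 < ρ) : expectedDistortion μ ρ 0 ≤ ρ⁻¹ := by
  calc expectedDistortion μ ρ 0 ≤ ∫ _, ρ⁻¹ ∂μ := by
        refine integral_mono_ae (integrable_distortion hμ hρ.le le_rfl) (integrable_const _) ?_
        filter_upwards [hμ] with x hx
        rw [distortion_of_le (by positivity)]
        exact inv_anti₀ hρ (by nlinarith)
    _ = ρ⁻¹ := by simp

end Measure

section Gamma

variable {a r : ℝ}

lemma gammaPDFReal_mul_distortion_le (ha : 0 < a) (hr : 0 < r) (hρ : 0 < ρ) (hγ : 0 < γ)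
    (hx : 0 < x) :
    gammaPDFReal a r x * distortion ρ γ x
      ≤ (Ioc 0 (γ / ρ)).indicator (fun x => r ^ a / Gamma a * ρ⁻¹ * x ^ (a - 1 - 1)) x
        + (γ * ρ)⁻¹ * gammaPDFReal a r x := by
  have hC : 0 ≤ r ^ a / Gamma a := div_nonneg (by positivity) (Gamma_pos_of_pos ha).le
  have hpdf := gammaPDFReal_nonneg ha hr x
  rcases lt_or_ge (ρ * x) γ with h | h
  · have hxt : x ∈ Ioc 0 (γ / ρ) := ⟨hx, ((lt_div_iff₀' hρ).2 h).le⟩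
    rw [distortion_of_lt h, indicator_of_mem hxt]
    calc gammaPDFReal a r x * (1 + ρ * x)⁻¹ ≤ r ^ a / Gamma a * x ^ (a - 1) * (ρ * x)⁻¹ :=
          mul_le_mul (gammaPDFReal_le ha hr.le hx.le) (inv_anti₀ (by positivity) (by linarith))
            (by positivity) (by positivity)
      _ = r ^ a / Gamma a * ρ⁻¹ * x ^ (a - 1 - 1) := by rw [rpow_sub_one hx.ne' (a - 1)]; ring
      _ ≤ _ := le_add_of_nonneg_right (by positivity)
  · rw [distortion_of_le h]
    calc gammaPDFReal a r x * (γ * ρ + 1 + ρ + ρ * x)⁻¹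
        ≤ (γ * ρ)⁻¹ * gammaPDFReal a r x := by
          rw [mul_comm]
          exact mul_le_mul_of_nonneg_right (inv_anti₀ (by positivity) (by nlinarith)) hpdf
      _ ≤ _ := le_add_of_nonneg_left <| indicator_nonneg (fun y (hy : y ∈ Ioc 0 (γ / ρ)) => by
          have := hy.1
          positivity) _

lemma expectedDistortion_gammaMeasure_le (ha : 1 < a) (hr : 0 < r) (hρ : 0 < ρ) (hγ : 0 < γ) :
    expectedDistortion (gammaMeasure a r) ρ γ
      ≤ r ^ a / Gamma a / (a - 1) * ρ⁻¹ * (γ / ρ) ^ (a - 1) + (γ * ρ)⁻¹ := by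
  have ha0 : 0 < a := by linarith
  have := isProbabilityMeasure_gammaMeasure ha0 hr
  set C := r ^ a / Gamma a
  set t := γ / ρ
  have hpdf := integrable_gammaPDFReal ha0 hr
  have hmass : ∫ x in Ioi 0, gammaPDFReal a r x = 1 := by
    simpa using (integral_gammaMeasure ha0 hr fun _ => 1).symm
  have hrpow : IntegrableOn (fun x => C * ρ⁻¹ * x ^ (a - 1 - 1)) (Ioc 0 t) := by
    rw [← intervalIntegrable_iff_integrableOn_Ioc_of_le (by positivity)]
    exact (intervalIntegral.intervalIntegrable_rpow' (by linarith)).const_mul _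
  have hint : IntegrableOn (fun x => gammaPDFReal a r x * distortion ρ γ x) (Ioi 0) := by
    refine hpdf.integrableOn.mul_bdd (c := 1) (measurable_distortion ρ γ).aestronglyMeasurable
      ((ae_restrict_iff' measurableSet_Ioi).2 (ae_of_all _ fun x (hx : 0 < x) => ?_))
    rw [Real.norm_of_nonneg (distortion_nonneg hρ.le hγ.le hx.le)]
    exact distortion_le_one hρ.le hγ.le hx.le
  calc expectedDistortion (gammaMeasure a r) ρ γ
      = ∫ x in Ioi 0, gammaPDFReal a r x * distortion ρ γ x := integral_gammaMeasure ha0 hr _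
    _ ≤ ∫ x in Ioi 0, ((Ioc 0 t).indicator (fun x => C * ρ⁻¹ * x ^ (a - 1 - 1)) x
        + (γ * ρ)⁻¹ * gammaPDFReal a r x) :=
      setIntegral_mono_on hint ((hrpow.integrable_indicator measurableSet_Ioc).integrableOn.add
        (hpdf.const_mul _).integrableOn) measurableSet_Ioi
        fun x hx => gammaPDFReal_mul_distortion_le ha0 hr hρ hγ hx
    _ = C / (a - 1) * ρ⁻¹ * t ^ (a - 1) + (γ * ρ)⁻¹ := by
      rw [integral_add (hrpow.integrable_indicator measurableSet_Ioc).integrableOn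
          (hpdf.const_mul _).integrableOn, integral_indicator measurableSet_Ioc,
        Measure.restrict_restrict measurableSet_Ioc, inter_eq_left.2 Ioc_subset_Ioi_self,
        integral_const_mul, integral_const_mul, hmass,
        ← intervalIntegral.integral_of_le (by positivity),
        integral_rpow (Or.inl (by linarith)), sub_add_cancel, zero_rpow (by linarith)]
      ring

lemma le_expectedDistortion_gammaMeasure_of_le (ha : 0 < a) (hr : 0 < r) {A : ℝ} (hA0 : 0 ≤ A)
    (hA1 : A ≤ 1) (hρ : 1 ≤ ρ) (hγ : 2 * ρ ^ A ≤ γ) :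
    r ^ a / Gamma a * exp (-r) / a / 2 * ρ ^ ((A - 1) * a - A)
      ≤ expectedDistortion (gammaMeasure a r) ρ γ := by
  have := isProbabilityMeasure_gammaMeasure ha hr
  have hρ0 : 0 < ρ := by linarith
  have hρA : 1 ≤ ρ ^ A := one_le_rpow hρ hA0
  set s := ρ ^ (A - 1) with hs
  have hs0 : 0 < s := by positivity
  have hs1 : s ≤ 1 := rpow_le_one_of_one_le_of_nonpos hρ (by linarith)
  have hρs : ρ * s = ρ ^ A := by
    rw [hs, rpow_sub_one hρ0.ne']
    field_simp
  have hpoint : ∀ x ∈ Ioc 0 s, (2 * ρ ^ A)⁻¹ ≤ distortion ρ γ x := by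
    rintro x ⟨hx0, hxs⟩
    have hρx : ρ * x ≤ ρ ^ A := hρs ▸ mul_le_mul_of_nonneg_left hxs hρ0.le
    rw [distortion_of_lt (by linarith)]
    exact inv_anti₀ (by positivity) (by linarith)
  calc r ^ a / Gamma a * exp (-r) / a / 2 * ρ ^ ((A - 1) * a - A)
      = (2 * ρ ^ A)⁻¹ * (r ^ a / Gamma a * ((s ^ a - 0 ^ a) / a) * exp (-(r * 1))) := by
        rw [zero_rpow ha.ne', sub_zero, mul_one, rpow_sub hρ0, hs, ← rpow_mul hρ0.le]
        field_simp
    _ ≤ (2 * ρ ^ A)⁻¹ * (gammaMeasure a r).real (Ioc 0 s) :=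
        mul_le_mul_of_nonneg_left (le_gammaMeasure_real_Ioc ha hr le_rfl hs0.le hs1)
          (by positivity)
    _ ≤ expectedDistortion (gammaMeasure a r) ρ γ :=
        mul_measureReal_le_expectedDistortion ae_nonneg_gammaMeasure hρ0.le
          ((by positivity : (0 : ℝ) ≤ 2 * ρ ^ A).trans hγ) measurableSet_Ioc hpoint

lemma le_expectedDistortion_gammaMeasure_of_ge (ha : 0 < a) (hr : 0 < r) {A : ℝ} (hA0 : 0 ≤ A)
    (hA1 : A ≤ 1) (hρ : 1 ≤ ρ) (hγ0 : 0 ≤ γ) (hγ : γ ≤ 2 * ρ ^ A) :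
    (gammaMeasure a r).real (Ioc 2 3) / 7 * ρ ^ (-(1 + A))
      ≤ expectedDistortion (gammaMeasure a r) ρ γ := by
  have := isProbabilityMeasure_gammaMeasure ha hr
  have hρ0 : 0 < ρ := by linarith
  have hρA : 1 ≤ ρ ^ A := one_le_rpow hρ hA0
  have hρA' : ρ ^ A ≤ ρ := by simpa using rpow_le_rpow_of_exponent_le hρ hA1
  have hpoint : ∀ x ∈ Ioc 2 3, (7 * (ρ * ρ ^ A))⁻¹ ≤ distortion ρ γ x := by
    rintro x ⟨hx2, hx3⟩
    rw [distortion_of_le (by nlinarith)]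
    exact inv_anti₀ (by positivity) (by nlinarith)
  calc (gammaMeasure a r).real (Ioc 2 3) / 7 * ρ ^ (-(1 + A))
      = (7 * (ρ * ρ ^ A))⁻¹ * (gammaMeasure a r).real (Ioc 2 3) := by
        rw [rpow_neg hρ0.le, rpow_add hρ0, rpow_one]
        ring
    _ ≤ expectedDistortion (gammaMeasure a r) ρ γ :=
        mul_measureReal_le_expectedDistortion ae_nonneg_gammaMeasure hρ0.le hγ0
          measurableSet_Ioc hpoint

lemma exists_le_expectedDistortion_gammaMeasure (ha : 0 < a) (hr : 0 < r) :
    ∃ c > 0, ∀ ρ ≥ 1, ∀ γ ≥ 0,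
      c * ρ ^ (-distortionExponent a) ≤ expectedDistortion (gammaMeasure a r) ρ γ := by
  set A := max (1 - 1 / a) 0 with hA
  have hA0 : 0 ≤ A := le_max_right _ _
  have hA1 : A ≤ 1 := max_le (by linarith [one_div_pos.2 ha]) zero_le_one
  have hAa : -(1 + A) ≤ (A - 1) * a - A := by
    rcases le_total (1 - 1 / a) 0 with h | h
    · have : a ≤ 1 := by rwa [sub_nonpos, le_div_iff₀ ha, one_mul] at h
      rw [hA, max_eq_right h]
      linarith
    · rw [hA, max_eq_left h]
      field_simp
      linarith
  have hGamma := Gamma_pos_of_pos ha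
  have h23 : 0 < (gammaMeasure a r).real (Ioc 2 3) := by
    refine lt_of_lt_of_le ?_
      (le_gammaMeasure_real_Ioc ha hr (by norm_num) (by norm_num) le_rfl)
    have : (2 : ℝ) ^ a < 3 ^ a := rpow_lt_rpow (by norm_num) (by norm_num) ha
    have : 0 < (3 : ℝ) ^ a - 2 ^ a := by linarith
    positivity
  refine ⟨min (r ^ a / Gamma a * exp (-r) / a / 2) ((gammaMeasure a r).real (Ioc 2 3) / 7),
    lt_min (by positivity) (by positivity), fun ρ hρ γ hγ => ?_⟩
  have hρ0 : 0 < ρ := by linarith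
  rcases le_total (2 * ρ ^ A) γ with h | h
  · calc _ ≤ r ^ a / Gamma a * exp (-r) / a / 2 * ρ ^ ((A - 1) * a - A) :=
          mul_le_mul (min_le_left _ _) (rpow_le_rpow_of_exponent_le hρ hAa) (by positivity)
            (by positivity)
      _ ≤ _ := le_expectedDistortion_gammaMeasure_of_le ha hr hA0 hA1 hρ h
  · calc _ ≤ (gammaMeasure a r).real (Ioc 2 3) / 7 * ρ ^ (-(1 + A)) :=
          mul_le_mul_of_nonneg_right (min_le_right _ _) (by positivity)
      _ ≤ _ := le_expectedDistortion_gammaMeasure_of_ge ha hr hA0 hA1 hρ hγ h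

lemma exists_expectedDistortion_gammaMeasure_le (ha : 0 < a) (hr : 0 < r) :
    ∃ K, ∀ ρ ≥ 1, ∃ γ ≥ 0,
      expectedDistortion (gammaMeasure a r) ρ γ ≤ K * ρ ^ (-distortionExponent a) := by
  rcases le_or_gt a 1 with ha1 | ha1
  · have := isProbabilityMeasure_gammaMeasure ha hr
    have hD : distortionExponent a = 1 := by
      rw [distortionExponent, max_eq_right, add_zero]
      rw [sub_nonpos, le_div_iff₀ ha, one_mul]
      exact ha1
    refine ⟨1, fun ρ hρ => ⟨0, le_rfl, ?_⟩⟩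
    rw [hD, one_mul, rpow_neg_one]
    exact expectedDistortion_zero_le ae_nonneg_gammaMeasure (by linarith)
  · have hD : distortionExponent a = 2 - 1 / a := by
      rw [distortionExponent, max_eq_left]
      · ring
      rw [sub_nonneg, div_le_one ha]
      exact ha1.le
    refine ⟨r ^ a / Gamma a / (a - 1) + 1, fun ρ hρ =>
      ⟨ρ ^ (1 - 1 / a), by positivity, ?_⟩⟩
    have hρ0 : 0 < ρ := by linarith
    have h₁ : ρ⁻¹ * (ρ ^ (1 - 1 / a) / ρ) ^ (a - 1) = ρ ^ (-distortionExponent a) := by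
      rw [← rpow_sub_one hρ0.ne', ← rpow_mul hρ0.le, ← rpow_neg_one, ← rpow_add hρ0, hD]
      congr 1
      field_simp
      ring
    have h₂ : (ρ ^ (1 - 1 / a) * ρ)⁻¹ = ρ ^ (-distortionExponent a) := by
      rw [← rpow_add_one hρ0.ne', ← rpow_neg hρ0.le, hD]
      ring_nf
    calc _ ≤ r ^ a / Gamma a / (a - 1) * ρ⁻¹ * (ρ ^ (1 - 1 / a) / ρ) ^ (a - 1)
          + (ρ ^ (1 - 1 / a) * ρ)⁻¹ :=
          expectedDistortion_gammaMeasure_le ha1 hr hρ0 (by positivity)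
      _ = _ := by rw [mul_assoc, h₁, h₂]; ring

end Gamma

end PartiallyInformed

open PartiallyInformed in
/-- Lemma 4: distortion exponent of the partially informed encoder lower
bound evaluated at the ergodic channel capacity, for Nakagami side information with
shape `L_s`: it equals `1 + (1 − 1/L_s)⁺`. -/
theorem partially_informed_exponent
    (Ls : ℝ) (hLs : 0 < Ls) :
    Tendsto (fun ρ : ℝ =>
        -(Real.log (sInf {d : ℝ | ∃ γhat : ℝ, 0 ≤ γhat ∧
            d = ∫ x, (if ρ * x < γhat then (1 + ρ * x)⁻¹
                else ((γhat + 1) * (1 + ρ) + ρ * x - γhat)⁻¹)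
              ∂(gammaMeasure Ls Ls)}) / Real.log ρ))
      atTop (nhds (1 + max (1 - 1 / Ls) 0)) := by
  obtain ⟨c, hc, hlow⟩ := exists_le_expectedDistortion_gammaMeasure hLs hLs
  obtain ⟨K, hup⟩ := exists_expectedDistortion_gammaMeasure_le hLs hLs
  refine tendsto_neg_log_div_log_of_le_of_le (K := K) (D := distortionExponent Ls) hc ?_
  filter_upwards [eventually_ge_atTop 1] with ρ hρ
  have hbdd : c * ρ ^ (-distortionExponent Ls) ∈ lowerBounds {d : ℝ | ∃ γhat : ℝ,
      0 ≤ γhat ∧ d = expectedDistortion (gammaMeasure Ls Ls) ρ γhat} := by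
    rintro _ ⟨γ, hγ, rfl⟩
    exact hlow ρ hρ γ hγ
  obtain ⟨γ, hγ, hγK⟩ := hup ρ hρ
  exact ⟨le_csInf ⟨_, 0, le_rfl, rfl⟩ hbdd,
    (csInf_le ⟨_, hbdd⟩ ⟨γ, hγ, rfl⟩).trans hγK⟩
end

section
/- Let L_c, L_s > 0 and let H₀ and Γ₀ be independent random variables, Gamma-distributed with shape L_c and rate L_c, and with shape L_s and rate L_s, respectively (each has mean 1). Then −lim_{ρ→∞} log( E[ ((1 + ρH₀)(1 + ρΓ₀))^{-1} ] ) / log ρ exists and equals min{L_c, 1} + min{L_s, 1}. -/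
/-!
For `X ∼ Γ(a, r)` the density is of order `x ^ (a - 1)` near `0`, so `P(X ≤ t)` is of order
`t ^ a` for small `t`. Restricting `E[(1 + ρX)⁻¹]` to `X ≤ ρ⁻¹` and to `X ≤ 1` bounds it below by
multiples of `ρ ^ (-a)` and of `ρ⁻¹`. Conversely `(1 + y)⁻¹ ≤ y ^ (-s)` for `0 ≤ s ≤ 1` bounds it
above by `E[X ^ (-s)] ρ ^ (-s)`, and this negative moment is finite for every `s < a`. Hence each
factor has exponent `min a 1`, and since the expectation of the product of independent factors
factorizes, the exponents add.
-/

open MeasureTheory ProbabilityTheory Filter Set Real Topology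

lemma integral_gammaMeasure_eq {a r : ℝ} (ha : 0 < a) (hr : 0 < r) (g : ℝ → ℝ) :
    ∫ x, g x ∂gammaMeasure a r
      = ∫ x in Ioi 0, r ^ a / Gamma a * x ^ (a - 1) * exp (-(r * x)) * g x := by
  rw [gammaMeasure, integral_withDensity_eq_integral_toReal_smul (f := gammaPDF a r)
      (measurable_gammaPDFReal a r).ennreal_ofReal (ae_of_all _ fun _ ↦ ENNReal.ofReal_lt_top),
    ← integral_Ici_eq_integral_Ioi, ← setIntegral_eq_integral_of_forall_compl_eq_zero]
  · refine setIntegral_congr_fun measurableSet_Ici fun x (hx : 0 ≤ x) ↦ ?_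
    simp only [gammaPDF, gammaPDFReal, if_pos hx, smul_eq_mul]
    rw [ENNReal.toReal_ofReal (by positivity)]
  · intro x (hx : ¬ 0 ≤ x)
    simp [gammaPDF, gammaPDFReal, hx]

lemma integrableOn_rpow_mul_exp_neg_mul {q r : ℝ} (hq : -1 < q) (hr : 0 < r) :
    IntegrableOn (fun x : ℝ ↦ x ^ q * exp (-(r * x))) (Ioi 0) := by
  refine (integrableOn_rpow_mul_exp_neg_mul_rpow hq one_pos hr).congr_fun
    (fun x _ ↦ ?_) measurableSet_Ioi
  simp [rpow_one]

lemma inv_one_add_le_rpow_neg {y s : ℝ} (hy : 0 < y) (hs₀ : 0 ≤ s) (hs₁ : s ≤ 1) :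
    (1 + y)⁻¹ ≤ y ^ (-s) := by
  rw [rpow_neg hy.le]
  refine inv_anti₀ (by positivity) ?_
  calc y ^ s ≤ (1 + y) ^ s := rpow_le_rpow hy.le (by linarith) hs₀
    _ ≤ (1 + y) ^ (1 : ℝ) := rpow_le_rpow_of_exponent_le (by linarith) hs₁
    _ = 1 + y := rpow_one _

lemma integral_inv_one_add_mul_gammaMeasure_le {a r s ρ : ℝ} (ha : 0 < a) (hr : 0 < r)
    (hs₀ : 0 ≤ s) (hsa : s < a) (hs₁ : s ≤ 1) (hρ : 0 < ρ) :
    ∫ x, (1 + ρ * x)⁻¹ ∂gammaMeasure a r ≤ r ^ s * Gamma (a - s) / Gamma a * ρ ^ (-s) := by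
  have hmoment := integral_rpow_mul_exp_neg_mul_Ioi (sub_pos.2 hsa) hr
  rw [integral_gammaMeasure_eq ha hr]
  calc ∫ x in Ioi 0, r ^ a / Gamma a * x ^ (a - 1) * exp (-(r * x)) * (1 + ρ * x)⁻¹
      ≤ ∫ x in Ioi 0, r ^ a / Gamma a * ρ ^ (-s) * (x ^ (a - s - 1) * exp (-(r * x))) := by
        refine integral_mono_of_nonneg (ae_restrict_of_forall_mem measurableSet_Ioi
          fun x (hx : 0 < x) ↦ by positivity)
          ((integrableOn_rpow_mul_exp_neg_mul (by linarith) hr).const_mul _)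
          (ae_restrict_of_forall_mem measurableSet_Ioi fun x (hx : 0 < x) ↦ ?_)
        have hbound := inv_one_add_le_rpow_neg (mul_pos hρ hx) hs₀ hs₁
        rw [mul_rpow hρ.le hx.le] at hbound
        calc r ^ a / Gamma a * x ^ (a - 1) * exp (-(r * x)) * (1 + ρ * x)⁻¹
            ≤ r ^ a / Gamma a * x ^ (a - 1) * exp (-(r * x)) * (ρ ^ (-s) * x ^ (-s)) := by
              gcongr
          _ = r ^ a / Gamma a * ρ ^ (-s) * (x ^ (a - s - 1) * exp (-(r * x))) := by
              rw [show a - s - 1 = a - 1 + -s by ring, rpow_add hx]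
              ring
    _ = r ^ s * Gamma (a - s) / Gamma a * ρ ^ (-s) := by
        rw [integral_const_mul, hmoment, one_div, inv_rpow hr.le, ← rpow_neg hr.le]
        have : r ^ a * r ^ (-(a - s)) = r ^ s := by rw [← rpow_add hr]; ring_nf
        rw [← this]
        ring

lemma le_integral_inv_one_add_mul_gammaMeasure {a r t ρ : ℝ} (ha : 0 < a) (hr : 0 < r)
    (ht : 0 < t) (hρ : 0 ≤ ρ) :
    r ^ a / Gamma a * exp (-(r * t)) * (t ^ a / a) * (1 + ρ * t)⁻¹
      ≤ ∫ x, (1 + ρ * x)⁻¹ ∂gammaMeasure a r := by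
  set c := r ^ a / Gamma a
  have hc : 0 < c := by positivity
  rw [integral_gammaMeasure_eq ha hr]
  have hint : IntegrableOn (fun x ↦ c * x ^ (a - 1) * exp (-(r * x)) * (1 + ρ * x)⁻¹) (Ioi 0) := by
    refine ((integrableOn_rpow_mul_exp_neg_mul (by linarith : -1 < a - 1) hr).const_mul c).mono'
      (by fun_prop) (ae_restrict_of_forall_mem measurableSet_Ioi fun x (hx : 0 < x) ↦ ?_)
    rw [norm_of_nonneg (by positivity), ← mul_assoc]
    exact mul_le_of_le_one_right (by positivity) (inv_le_one_of_one_le₀ (by nlinarith))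
  calc c * exp (-(r * t)) * (t ^ a / a) * (1 + ρ * t)⁻¹
      = ∫ x in Ioc 0 t, c * exp (-(r * t)) * (1 + ρ * t)⁻¹ * x ^ (a - 1) := by
        rw [integral_const_mul, ← intervalIntegral.integral_of_le ht.le,
          integral_rpow (Or.inl (by linarith)), sub_add_cancel, zero_rpow ha.ne']
        ring
    _ ≤ ∫ x in Ioc 0 t, c * x ^ (a - 1) * exp (-(r * x)) * (1 + ρ * x)⁻¹ := by
        refine setIntegral_mono_on
          ((intervalIntegral.intervalIntegrable_rpow' (by linarith : -1 < a - 1)).1.const_mul _)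
          (hint.mono_set Ioc_subset_Ioi_self) measurableSet_Ioc fun x ⟨hx, hxt⟩ ↦ ?_
        calc c * exp (-(r * t)) * (1 + ρ * t)⁻¹ * x ^ (a - 1)
            = c * x ^ (a - 1) * exp (-(r * t)) * (1 + ρ * t)⁻¹ := by ring
          _ ≤ c * x ^ (a - 1) * exp (-(r * x)) * (1 + ρ * x)⁻¹ := by gcongr
    _ ≤ ∫ x in Ioi 0, c * x ^ (a - 1) * exp (-(r * x)) * (1 + ρ * x)⁻¹ :=
        setIntegral_mono_set hint (ae_restrict_of_forall_mem measurableSet_Ioi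
          fun x (hx : 0 < x) ↦ by positivity) Ioc_subset_Ioi_self.eventuallyLE

lemma neg_log_mul_rpow_neg_div_log {ρ C e : ℝ} (hρ : 1 < ρ) (hC : 0 < C) :
    -(log (C * ρ ^ (-e)) / log ρ) = e - log C / log ρ := by
  have hlog : log ρ ≠ 0 := (log_pos hρ).ne'
  rw [log_mul hC.ne' (rpow_pos_of_pos (by linarith) _).ne', log_rpow (by linarith)]
  field_simp
  ring

lemma tendsto_neg_log_div_log_of_bounds {f : ℝ → ℝ} {m c : ℝ} (hc : 0 < c)
    (hlow : ∀ᶠ ρ in atTop, c * ρ ^ (-m) ≤ f ρ)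
    (hup : ∀ᶠ s in 𝓝[<] m, ∃ C, ∀ᶠ ρ in atTop, f ρ ≤ C * ρ ^ (-s)) :
    Tendsto (fun ρ ↦ -(log (f ρ) / log ρ)) atTop (𝓝 m) := by
  have hshift (K t : ℝ) : Tendsto (fun ρ ↦ t - log K / log ρ) atTop (𝓝 t) := by
    simpa using tendsto_const_nhds.sub (tendsto_const_nhds.div_atTop tendsto_log_atTop)
  refine tendsto_order.2 ⟨fun a ha ↦ ?_, fun b hb ↦ ?_⟩
  · obtain ⟨s, ⟨C, hC⟩, has, -⟩ := (hup.and (Ioo_mem_nhdsLT ha)).exists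
    filter_upwards [(hshift C s).eventually (lt_mem_nhds has), hC, hlow,
      eventually_gt_atTop 1] with ρ hs hfC hfc hρ
    have hf : 0 < f ρ := (mul_pos hc (rpow_pos_of_pos (by linarith) _)).trans_le hfc
    have hC₀ : 0 < C := pos_of_mul_pos_left (hf.trans_le hfC) (rpow_pos_of_pos (by linarith) _).le
    calc a < s - log C / log ρ := hs
      _ = -(log (C * ρ ^ (-s)) / log ρ) := (neg_log_mul_rpow_neg_div_log hρ hC₀).symm
      _ ≤ -(log (f ρ) / log ρ) := by gcongr; exact (log_pos hρ).le
  · filter_upwards [(hshift c m).eventually (gt_mem_nhds hb), hlow,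
      eventually_gt_atTop 1] with ρ hm hfc hρ
    calc -(log (f ρ) / log ρ) ≤ -(log (c * ρ ^ (-m)) / log ρ) := by
          gcongr
          exact (log_pos hρ).le
      _ = m - log c / log ρ := neg_log_mul_rpow_neg_div_log hρ hc
      _ < b := hm

lemma rpow_neg_min_le_integral_inv_one_add_mul_gammaMeasure {a r ρ : ℝ} (ha : 0 < a)
    (hr : 0 < r) (hρ : 1 ≤ ρ) :
    r ^ a / Gamma a * exp (-r) / (2 * a) * ρ ^ (-min a 1)
      ≤ ∫ x, (1 + ρ * x)⁻¹ ∂gammaMeasure a r := by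
  have hρ₀ : 0 < ρ := by linarith
  rcases min_choice a 1 with h | h <;> rw [h]
  · refine le_trans ?_ (le_integral_inv_one_add_mul_gammaMeasure ha hr (inv_pos.2 hρ₀) hρ₀.le)
    rw [mul_inv_cancel₀ hρ₀.ne', inv_rpow hρ₀.le, ← rpow_neg hρ₀.le]
    have hexp : exp (-r) ≤ exp (-(r * ρ⁻¹)) := by
      gcongr
      exact mul_le_of_le_one_right hr.le (inv_le_one_of_one_le₀ hρ)
    calc r ^ a / Gamma a * exp (-r) / (2 * a) * ρ ^ (-a)
        = r ^ a / Gamma a * exp (-r) * (ρ ^ (-a) / a) * (1 + 1)⁻¹ := by ring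
      _ ≤ _ := by gcongr
  · refine le_trans ?_ (le_integral_inv_one_add_mul_gammaMeasure ha hr one_pos hρ₀.le)
    rw [mul_one, one_rpow, rpow_neg_one]
    calc r ^ a / Gamma a * exp (-r) / (2 * a) * ρ⁻¹
        = r ^ a / Gamma a * exp (-r) * (1 / a) * (2 * ρ)⁻¹ := by ring
      _ ≤ _ := by gcongr; linarith

theorem tendsto_neg_log_integral_inv_one_add_mul_gammaMeasure {a r : ℝ} (ha : 0 < a)
    (hr : 0 < r) :
    Tendsto (fun ρ ↦ -(log (∫ x, (1 + ρ * x)⁻¹ ∂gammaMeasure a r) / log ρ)) atTop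
      (𝓝 (min a 1)) := by
  refine tendsto_neg_log_div_log_of_bounds (by positivity) (eventually_ge_atTop 1 |>.mono
    fun ρ hρ ↦ rpow_neg_min_le_integral_inv_one_add_mul_gammaMeasure ha hr hρ) ?_
  filter_upwards [Ioo_mem_nhdsLT (lt_min ha one_pos)] with s ⟨hs₀, hs⟩
  exact ⟨_, eventually_gt_atTop 0 |>.mono fun ρ hρ ↦ integral_inv_one_add_mul_gammaMeasure_le
    ha hr hs₀.le (hs.trans_le (min_le_left _ _)) (hs.le.trans (min_le_right _ _)) hρ⟩

/-- distortion exponent of the informed encoder lower bound for Nakagami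
fading channel and side information: `Δ_inf = min{L_c,1} + min{L_s,1}`. -/
theorem informed_encoder_exponent
    (Lc Ls : ℝ) (hLc : 0 < Lc) (hLs : 0 < Ls) :
    Tendsto (fun ρ : ℝ =>
        -(Real.log (∫ p : ℝ × ℝ, ((1 + ρ * p.1) * (1 + ρ * p.2))⁻¹
            ∂((gammaMeasure Lc Lc).prod (gammaMeasure Ls Ls))) / Real.log ρ))
      atTop (nhds (min Lc 1 + min Ls 1)) := by
  refine ((tendsto_neg_log_integral_inv_one_add_mul_gammaMeasure hLc hLc).add
    (tendsto_neg_log_integral_inv_one_add_mul_gammaMeasure hLs hLs)).congr' ?_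
  filter_upwards [eventually_ge_atTop 1] with ρ hρ
  have hpos {L : ℝ} (hL : 0 < L) : 0 < ∫ x, (1 + ρ * x)⁻¹ ∂gammaMeasure L L :=
    lt_of_lt_of_le (by positivity)
      (rpow_neg_min_le_integral_inv_one_add_mul_gammaMeasure hL hL hρ)
  have := isProbabilityMeasure_gammaMeasure hLc hLc
  have := isProbabilityMeasure_gammaMeasure hLs hLs
  simp_rw [mul_inv]
  rw [integral_prod_mul (fun x ↦ (1 + ρ * x)⁻¹) (fun y ↦ (1 + ρ * y)⁻¹),
    log_mul (hpos hLc).ne' (hpos hLs).ne']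
  ring
end

section
/- Let L_c, L_s > 0 and write (x)^+ = max{x,0}. For r ∈ ℝ define Δ_{h1}(r) = inf{ (1−β)^+ + L_c·α + L_s·β : α, β ≥ 0 and (1−β)^+ − (α−1)^+ ≤ r } and Δ_{h2}(r) = inf{ max((1−β)^+, (1−α)^+ + r) + L_c·α + L_s·β : α, β ≥ 0 and (1−β)^+ − (α−1)^+ > r }, with the convention that the infimum over an empty set is +∞. Then sup_{r∈ℝ} min{Δ_{h1}(r), Δ_{h2}(r)} equals min{1, L_s + L_c} if L_s ≤ 1, and 1 + min{1, L_c}·(L_s − 1)/(L_s − 1 + min{1, L_c}) if L_s > 1. -/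
/-!
Each infimum is bounded above by exhibiting a point `(α, β)` and below by a pointwise bound on
the cost.

For `Ls ≤ 1` the value `c = min 1 (Ls + Lc)` is approached as `r ↑ 0` but not attained. For
`r ≥ 0` the outage point `(0, 1)` costs `Ls ≤ c`; for `r < 0` the non-outage points `(0, 0)` and
`(1, 1)` cost `1` and `Ls + Lc`. Conversely, for `r < 0` an outage point needs `α > 1` and so
costs at least `Ls + Lc`, while every non-outage point costs at least `c + r`.

For `Ls > 1` and `m = min 1 Lc`, outage costs at `r` are at least `Ls - (Ls - 1) r` as soon as
`(Ls - 1) (1 - r) ≤ Lc`, and non-outage costs are at least `1 + m r`. The two bounds cross at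
`r⋆ = (Ls - 1) / (Ls - 1 + m)`, where the supremum is attained: the outage point `(0, 1 - r⋆)`
serves every `r ≥ r⋆`, and the non-outage points `(0, 0)` and `(max r 0, 0)` every `r ≤ r⋆`.
-/

theorem min_one_le_max_one_sub_add_mul {K v : ℝ} (hK : 0 ≤ K) (hv : 0 ≤ v) :
    min 1 K ≤ max (1 - v) 0 + K * v := by
  rcases le_total v 1 with hv1 | hv1
  · have : 1 - v ≤ max (1 - v) 0 := le_max_left _ _
    nlinarith [min_le_left 1 K, min_le_right 1 K]
  · have : 0 ≤ max (1 - v) 0 := le_max_right _ _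
    nlinarith [min_le_right 1 K]

namespace HDA

variable (Lc Ls : ℝ)

/-- Outage occurs at `(α, β)` when `outageGap α β ≤ r`. -/
def outageGap (α β : ℝ) : ℝ := max (1 - β) 0 - max (α - 1) 0

def outageCost (α β : ℝ) : ℝ := max (1 - β) 0 + Lc * α + Ls * β

def nonOutageCost (r α β : ℝ) : ℝ :=
  max (max (1 - β) 0) (max (1 - α) 0 + r) + Lc * α + Ls * β

/-- The paper's `Δ_{h1}(r)`. -/
noncomputable def outageExponent (r : ℝ) : EReal :=
  sInf {x : EReal | ∃ α β : ℝ, 0 ≤ α ∧ 0 ≤ β ∧ outageGap α β ≤ r ∧ x = (outageCost Lc Ls α β : ℝ)}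

/-- The paper's `Δ_{h2}(r)`. -/
noncomputable def nonOutageExponent (r : ℝ) : EReal :=
  sInf {x : EReal | ∃ α β : ℝ, 0 ≤ α ∧ 0 ≤ β ∧ r < outageGap α β ∧
    x = (nonOutageCost Lc Ls r α β : ℝ)}

noncomputable def hdaExponent : EReal :=
  ⨆ r : ℝ, min (outageExponent Lc Ls r) (nonOutageExponent Lc Ls r)

variable {Lc Ls}

theorem outageExponent_le {r α β : ℝ} (hα : 0 ≤ α) (hβ : 0 ≤ β) (h : outageGap α β ≤ r) :
    outageExponent Lc Ls r ≤ outageCost Lc Ls α β :=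
  sInf_le ⟨α, β, hα, hβ, h, rfl⟩

theorem nonOutageExponent_le {r α β : ℝ} (hα : 0 ≤ α) (hβ : 0 ≤ β) (h : r < outageGap α β) :
    nonOutageExponent Lc Ls r ≤ nonOutageCost Lc Ls r α β :=
  sInf_le ⟨α, β, hα, hβ, h, rfl⟩

theorem le_outageExponent {r c : ℝ}
    (h : ∀ α β, 0 ≤ α → 0 ≤ β → outageGap α β ≤ r → c ≤ outageCost Lc Ls α β) :
    (c : EReal) ≤ outageExponent Lc Ls r := by
  refine le_sInf ?_
  rintro _ ⟨α, β, hα, hβ, hgap, rfl⟩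
  exact EReal.coe_le_coe (h α β hα hβ hgap)

theorem le_nonOutageExponent {r c : ℝ} (h : ∀ α β, 0 ≤ α → 0 ≤ β → c ≤ nonOutageCost Lc Ls r α β) :
    (c : EReal) ≤ nonOutageExponent Lc Ls r := by
  refine le_sInf ?_
  rintro _ ⟨α, β, hα, hβ, -, rfl⟩
  exact EReal.coe_le_coe (h α β hα hβ)

theorem one_lt_of_outageGap_le {r α β : ℝ} (h : outageGap α β ≤ r) (hr : r < max (1 - β) 0) :
    1 < α := by
  have : 0 < max (α - 1) 0 := by unfold outageGap at h; linarith
  rcases lt_max_iff.1 this with h' | h' <;> linarith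

theorem add_le_outageCost (hLc : 0 ≤ Lc) (hLs₀ : 0 ≤ Ls) (hLs : Ls ≤ 1) {r α β : ℝ}
    (hβ : 0 ≤ β) (hr : r < 0) (h : outageGap α β ≤ r) : Ls + Lc ≤ outageCost Lc Ls α β := by
  have hα := one_lt_of_outageGap_le h (hr.trans_le (le_max_right _ _))
  have hb := min_one_le_max_one_sub_add_mul hLs₀ hβ
  rw [min_eq_right hLs] at hb
  unfold outageCost
  nlinarith

theorem min_add_le_nonOutageCost (hLc : 0 ≤ Lc) (hLs : 0 ≤ Ls) {r α β : ℝ} (hr : r ≤ 0)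
    (hα : 0 ≤ α) (hβ : 0 ≤ β) : min 1 (Ls + Lc) + r ≤ nonOutageCost Lc Ls r α β := by
  unfold nonOutageCost
  have hmax := le_max_left (max (1 - β) 0) (max (1 - α) 0 + r)
  have hmax' := le_max_right (max (1 - β) 0) (max (1 - α) 0 + r)
  rcases le_total α β with hαβ | hβα
  · have := min_one_le_max_one_sub_add_mul (add_nonneg hLs hLc) hα
    nlinarith
  · have := min_one_le_max_one_sub_add_mul (add_nonneg hLs hLc) hβ
    nlinarith

theorem sub_mul_le_outageCost (hLc : 0 ≤ Lc) (hLs : 1 ≤ Ls) {r α β : ℝ}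
    (hr : (Ls - 1) * (1 - r) ≤ Lc) (hα : 0 ≤ α) (hβ : 0 ≤ β) (h : outageGap α β ≤ r) :
    Ls - (Ls - 1) * r ≤ outageCost Lc Ls α β := by
  unfold outageCost
  set b := max (1 - β) 0
  have hb₁ : b ≤ 1 := max_le (by linarith) zero_le_one
  have hβb : 1 - b ≤ β := by linarith [le_max_left (1 - β) 0]
  have hcost : (Ls - 1) * (b - r) ≤ Lc * α := by
    rcases le_or_gt b r with hbr | hrb
    · nlinarith
    · nlinarith [one_lt_of_outageGap_le h hrb]
  nlinarith

theorem one_add_mul_le_nonOutageCost (hLc : 0 ≤ Lc) (hLs : 1 ≤ Ls) {r α β : ℝ} (hα : 0 ≤ α)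
    (hβ : 0 ≤ β) : 1 + min 1 Lc * r ≤ nonOutageCost Lc Ls r α β := by
  unfold nonOutageCost
  set m := min 1 Lc
  have hm₀ : 0 ≤ m := le_min zero_le_one hLc
  have hm₁ : m ≤ 1 := min_le_left _ _
  have hmLc : m ≤ Lc := min_le_right _ _
  have hbβ := min_one_le_max_one_sub_add_mul (hLs.trans' zero_le_one) hβ
  rw [min_eq_left hLs] at hbβ
  set b := max (1 - β) 0
  set M := max b (max (1 - α) 0 + r)
  have hbM : b ≤ M := le_max_left _ _
  have hαM : 1 - α + r ≤ M := by
    linarith [le_max_left (1 - α) 0, le_max_right b (max (1 - α) 0 + r)]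
  -- `M` dominates the convex combination `(1 - m) b + m (1 - α + r)`.
  nlinarith [mul_le_mul_of_nonneg_left hbM (sub_nonneg.2 hm₁), mul_le_mul_of_nonneg_left hαM hm₀,
    mul_le_mul_of_nonneg_right hmLc hα, mul_le_mul_of_nonneg_left hbβ (sub_nonneg.2 hm₁),
    mul_nonneg hm₀ (mul_nonneg (hLs.trans' zero_le_one) hβ)]

theorem outageExponent_le_of_le {r s : ℝ} (hs₀ : 0 ≤ s) (hs₁ : s ≤ 1) (hsr : s ≤ r) :
    outageExponent Lc Ls r ≤ (s + Ls * (1 - s) : ℝ) := by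
  have hgap : outageGap 0 (1 - s) = s := by simp [outageGap, hs₀]
  have hcost : outageCost Lc Ls 0 (1 - s) = s + Ls * (1 - s) := by simp [outageCost, hs₀]
  exact hcost ▸ outageExponent_le le_rfl (sub_nonneg.2 hs₁) (by rwa [hgap])

theorem nonOutageExponent_le_one_add_min_mul {r : ℝ} (hr : r < 1) :
    nonOutageExponent Lc Ls r ≤ (1 + min 1 Lc * max r 0 : ℝ) := by
  set p := max r 0
  have hp₀ : 0 ≤ p := le_max_right _ _
  have hp₁ : p ≤ 1 := max_le hr.le zero_le_one
  have hgap : r < outageGap p 0 := by simp [outageGap, hp₁, hr]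
  have hgap₀ : r < outageGap 0 0 := by simp [outageGap, hr]
  have hcost : nonOutageCost Lc Ls r p 0 = 1 + Lc * p := by
    have : 1 - p + r ≤ 1 := by linarith [le_max_left r 0]
    simp [nonOutageCost, max_eq_left (sub_nonneg.2 hp₁), this]
  have hcost₀ : nonOutageCost Lc Ls r 0 0 = 1 + p := by
    rcases le_total r 0 with h | h <;> simp [nonOutageCost, p, h]
  rw [min_mul_of_nonneg _ _ hp₀, one_mul, ← min_add_add_left, EReal.coe_strictMono.monotone.map_min]
  exact le_min (hcost₀ ▸ nonOutageExponent_le le_rfl le_rfl hgap₀)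
    (hcost ▸ nonOutageExponent_le hp₀ le_rfl hgap)

theorem nonOutageExponent_le_add {r : ℝ} (hr : r < 0) :
    nonOutageExponent Lc Ls r ≤ (Ls + Lc : ℝ) := by
  have hgap : r < outageGap 1 1 := by simpa [outageGap] using hr
  have hcost : nonOutageCost Lc Ls r 1 1 = Ls + Lc := by simp [nonOutageCost, hr.le, add_comm]
  exact hcost ▸ nonOutageExponent_le zero_le_one zero_le_one hgap

theorem hdaExponent_of_le_one (hLc : 0 ≤ Lc) (hLs₀ : 0 ≤ Ls) (hLs : Ls ≤ 1) :
    hdaExponent Lc Ls = (min 1 (Ls + Lc) : ℝ) := by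
  set c := min 1 (Ls + Lc)
  refine le_antisymm (iSup_le fun r => ?_) (EReal.ge_of_forall_gt_iff_ge.1 fun z hz => ?_)
  · rcases le_or_gt 0 r with hr | hr
    · refine min_le_left _ _ |>.trans <| (outageExponent_le_of_le le_rfl zero_le_one hr).trans ?_
      exact EReal.coe_le_coe (le_min (by linarith) (by linarith))
    · have hone := nonOutageExponent_le_one_add_min_mul (Lc := Lc) (Ls := Ls) (hr.trans one_pos)
      rw [max_eq_right hr.le, mul_zero, add_zero] at hone
      rw [EReal.coe_strictMono.monotone.map_min]
      exact min_le_right _ _ |>.trans <| le_min hone (nonOutageExponent_le_add hr)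
  · have hzc : z < c := EReal.coe_lt_coe_iff.1 hz
    refine le_iSup_of_le (z - c) (le_min (le_outageExponent fun α β _ hβ h => ?_)
      (le_nonOutageExponent fun α β hα hβ => ?_))
    · linarith [min_le_right 1 (Ls + Lc), add_le_outageCost hLc hLs₀ hLs hβ (by linarith) h]
    · linarith [min_add_le_nonOutageCost hLc hLs₀ (by linarith : z - c ≤ 0) hα hβ]

theorem hdaExponent_of_one_lt (hLc : 0 < Lc) (hLs : 1 < Ls) :
    hdaExponent Lc Ls = (1 + min 1 Lc * (Ls - 1) / (Ls - 1 + min 1 Lc) : ℝ) := by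
  set m := min 1 Lc
  have hm₀ : 0 < m := lt_min one_pos hLc
  have hd : 0 < Ls - 1 + m := by linarith
  set r₀ := (Ls - 1) / (Ls - 1 + m)
  have hr₀ : 0 < r₀ := div_pos (by linarith) hd
  have hr₁ : r₀ < 1 := (div_lt_one hd).2 (by linarith)
  have hcross : m * r₀ = (Ls - 1) * (1 - r₀) := by
    simp only [r₀]; field_simp; ring
  rw [mul_div_assoc]
  refine le_antisymm (iSup_le fun r => ?_) (le_iSup_of_le r₀ (le_min ?_ ?_))
  · rcases le_total r r₀ with hr | hr
    · refine min_le_right _ _ |>.trans <|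
        (nonOutageExponent_le_one_add_min_mul (hr.trans_lt hr₁)).trans (EReal.coe_le_coe ?_)
      nlinarith [max_le hr hr₀.le]
    · refine min_le_left _ _ |>.trans <|
        (outageExponent_le_of_le hr₀.le hr₁.le hr).trans (EReal.coe_le_coe ?_)
      linarith
  · refine le_outageExponent fun α β hα hβ h => ?_
    have := sub_mul_le_outageCost hLc.le hLs.le (by nlinarith [min_le_right 1 Lc]) hα hβ h
    linarith
  · exact le_nonOutageExponent fun α β hα hβ =>
      one_add_mul_le_nonOutageCost hLc.le hLs.le hα hβ

end HDA

open HDA in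
/-- the finite-dimensional optimization of Appendix D giving the HDA
distortion exponent: `sup_{r∈ℝ} min{Δ_{h1}(r), Δ_{h2}(r)}` with infima over empty sets
equal to `+∞` (taken in `EReal`). -/
theorem hda_exponent_optimization
    (Lc Ls : ℝ) (hLc : 0 < Lc) (hLs : 0 < Ls) :
    (⨆ r : ℝ, min
        (sInf {x : EReal | ∃ α β : ℝ, 0 ≤ α ∧ 0 ≤ β ∧
            max (1 - β) 0 - max (α - 1) 0 ≤ r ∧
            x = ((max (1 - β) 0 + Lc * α + Ls * β : ℝ) : EReal)})
        (sInf {x : EReal | ∃ α β : ℝ, 0 ≤ α ∧ 0 ≤ β ∧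
            r < max (1 - β) 0 - max (α - 1) 0 ∧
            x = ((max (max (1 - β) 0) (max (1 - α) 0 + r) + Lc * α + Ls * β : ℝ) : EReal)}))
      = ((if Ls ≤ 1 then min 1 (Ls + Lc)
          else 1 + min 1 Lc * (Ls - 1) / (Ls - 1 + min 1 Lc) : ℝ) : EReal) := by
  change hdaExponent Lc Ls = _
  split_ifs with hLs₁
  · exact hdaExponent_of_le_one hLc.le hLs.le hLs₁
  · exact hdaExponent_of_one_lt hLc (not_le.1 hLs₁)
end
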